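/- arXiv:2601.02243 — 11 statements merged into one kernel-verified Lean document; each statement's English description precedes it below -/
import Mathlib

section
/- Assume π⁻ ≤ α_r·πʷ ≤ π⁺ and g < Γ_IM. Then the point (w_h^IM, w̲_r) maximizes the profit over the feasible set: for all (w_h, w_r) ∈ F, Π(w_h, w_r, g) ≤ Π(w_h^IM, w̲_r, g). -/
open Set

noncomputable section

/-- Net electricity exchange. -/
def netz (αr ηh wh wr g : ℝ) : ℝ := wr / αr - wh / ηh - g

/-- Electricity payment under net metering. -/
def epay (πp πm π0 αr ηh wh wr g : ℝ) : ℝ :=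
  πp * max (netz αr ηh wh wr g) 0 + πm * min (netz αr ηh wh wr g) 0 + π0

/-- WDP profit. -/
def profit (πw πp πm π0 αr αh ηh : ℝ) (C : ℝ → ℝ) (wh wr g : ℝ) : ℝ :=
  πw * (wh + wr) - epay πp πm π0 αr ηh wh wr g - C (wh / αh)

/-- clamp(x, a, b) = max(a, min(x, b)). -/
def clampR (x a b : ℝ) : ℝ := max a (min x b)

/-- Value function: sup of profit over the feasible rectangle. -/
def Pstar (πw πp πm π0 αr αh ηh : ℝ) (C : ℝ → ℝ) (wlh wuh wlr wur g : ℝ) : ℝ :=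
  sSup ((fun p : ℝ × ℝ => profit πw πp πm π0 αr αh ηh C p.1 p.2 g) ''
    (Icc wlh wuh ×ˢ Icc wlr wur))

/-- import region.  If g < Γ_IM then (w_h^IM, w̲_r) is optimal. -/
theorem optimal_dispatch_IM
    (πp πm π0 πw αh ηh αr wlh wuh wlr wur : ℝ) (C : ℝ → ℝ)
    (hπ : πm ≤ πp) (hπm : 0 ≤ πm) (hπw : 0 ≤ πw)
    (hαh : 0 < αh) (hηh : 0 < ηh) (hαr : 0 < αr)
    (hwlh : 0 ≤ wlh) (hwhb : wlh ≤ wuh) (hwlr : 0 ≤ wlr) (hwrb : wlr ≤ wur)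
    (hC : StrictConvexOn ℝ univ C) (hCd : Differentiable ℝ C) (hCm : Monotone C)
    (Wfun : ℝ → ℝ)
    (hWfun : ∀ δ : ℝ, Wfun δ ∈ Icc wlh wuh ∧
      ∀ w ∈ Icc wlh wuh,
        (πw + δ / ηh) * w - C (w / αh) ≤ (πw + δ / ηh) * Wfun δ - C (Wfun δ / αh))
    (hmid1 : πm ≤ αr * πw) (hmid2 : αr * πw ≤ πp)
    (g : ℝ) (hg : g < wlr / αr - Wfun πp / ηh) :
    ∀ wh ∈ Icc wlh wuh, ∀ wr ∈ Icc wlr wur,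
      profit πw πp πm π0 αr αh ηh C wh wr g ≤
        profit πw πp πm π0 αr αh ηh C (Wfun πp) wlr g := by
  intro wh hwh wr hwr
  obtain ⟨hWmem, hWmax⟩ := hWfun πp
  have hkey := hWmax wh hwh
  set W := Wfun πp with hWdef
  have hzpos : 0 ≤ wlr / αr - W / ηh - g := by linarith
  unfold profit epay netz
  rw [max_eq_left hzpos, min_eq_right hzpos]
  set z := wr / αr - wh / ηh - g with hz
  have h2 : max z 0 + min z 0 = z := by have := max_add_min z 0; linarith
  have h3 : min z 0 ≤ 0 := min_le_right _ _
  have h1 : πp * z ≤ πp * max z 0 + πm * min z 0 := by nlinarith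
  have h5 : (πw - πp / αr) * wr ≤ (πw - πp / αr) * wlr := by
    have hc : πw - πp / αr ≤ 0 := by
      rw [sub_nonpos, le_div_iff₀ hαr]; linarith
    nlinarith [hwr.1]
  have h6 : πp * z = πp / αr * wr - πp / ηh * wh - πp * g := by
    rw [hz]; field_simp
  have h7 : πp * (wlr / αr - W / ηh - g) = πp / αr * wlr - πp / ηh * W - πp * g := by
    field_simp
  clear_value W z
  linarith [hkey, h1, h5, h6, h7]
end
end

section
/- Assume π⁻ ≤ α_r·πʷ ≤ π⁺ and Γ_IM ≤ g < Γ_NZ1. Then the point (clamp(η_h·(w̲_r/α_r − g), w̲_h, w̄_h), w̲_r) maximizes the profit over the feasible set: for all (w_h, w_r) ∈ F, Π(w_h, w_r, g) ≤ Π(clamp(η_h·(w̲_r/α_r − g), w̲_h, w̄_h), w̲_r, g). -/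
open Set

noncomputable section

lemma concave_side (C : ℝ → ℝ) (hC : ConvexOn ℝ univ C) (L αh u v m : ℝ)
    (hseg : v ∈ segment ℝ u m)
    (hm : L*u - C (u/αh) ≤ L*m - C (m/αh)) :
    L*u - C (u/αh) ≤ L*v - C (v/αh) := by
  obtain ⟨a, b, ha, hb, hab, hv⟩ := hseg
  simp only [smul_eq_mul] at hv
  have hc : C (v/αh) ≤ a * C (u/αh) + b * C (m/αh) := by
    have h2 := hC.2 (mem_univ (u/αh)) (mem_univ (m/αh)) ha hb hab
    simp only [smul_eq_mul] at h2
    have hv2 : v/αh = a*(u/αh) + b*(m/αh) := by rw [← hv]; ring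
    rw [hv2]; exact h2
  calc L*u - C (u/αh) = a*(L*u - C (u/αh)) + b*(L*u - C (u/αh)) := by
        rw [← add_mul, hab, one_mul]
    _ ≤ a*(L*u - C (u/αh)) + b*(L*m - C (m/αh)) :=
        add_le_add (le_refl _) (mul_le_mul_of_nonneg_left hm hb)
    _ = L*(a*u + b*m) - (a*C (u/αh) + b*C (m/αh)) := by ring
    _ ≤ L*v - C (v/αh) := by rw [hv]; linarith

lemma profit_le_relax (πw πp πm π0 αr αh ηh lam : ℝ) (C : ℝ → ℝ) (wh wr g : ℝ)
    (h1 : πm ≤ lam) (h2 : lam ≤ πp) :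
    profit πw πp πm π0 αr αh ηh C wh wr g ≤
      πw*(wh+wr) - lam * netz αr ηh wh wr g - π0 - C (wh/αh) := by
  unfold profit epay
  set z := netz αr ηh wh wr g with hzdef
  have hz : max z 0 + min z 0 = z := by have := max_add_min z 0; linarith
  have hz2 : lam * max z 0 + lam * min z 0 = lam * z := by rw [← mul_add, hz]
  have a1 : 0 ≤ (πp - lam) * max z 0 := mul_nonneg (by linarith) (le_max_right z 0)
  have a2 : (lam - πm) * min z 0 ≤ 0 :=
    mul_nonpos_of_nonneg_of_nonpos (by linarith) (min_le_right z 0)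
  nlinarith [a1, a2, hz2]

lemma final_step (πw π0 αr αh ηh lam : ℝ) (C : ℝ → ℝ) (wh wr x wlr g : ℝ)
    (hαr : 0 < αr)
    (hG : (πw + lam/ηh)*wh - C (wh/αh) ≤ (πw + lam/ηh)*x - C (x/αh))
    (hxη : x/ηh = wlr/αr - g)
    (hlam : αr*πw ≤ lam) (hwr : wlr ≤ wr) :
    πw*(wh+wr) - lam*(wr/αr - wh/ηh - g) - π0 - C (wh/αh) ≤
      πw*(x+wlr) - π0 - C (x/αh) := by
  have hpw : πw ≤ lam/αr := (le_div_iff₀ hαr).2 (by linarith)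
  have hkey : 0 ≤ (wr - wlr) * (lam/αr - πw) := mul_nonneg (by linarith) (by linarith)
  have hxηl : lam*(x/ηh) = lam*(wlr/αr - g) := by rw [hxη]
  ring_nf at hG hxηl hkey ⊢
  linarith [hG, hxηl, hkey]

/-- lower net-zero boundary region Γ_IM ≤ g < Γ_NZ1. -/
theorem optimal_dispatch_NZ_lower
    (πp πm π0 πw αh ηh αr wlh wuh wlr wur : ℝ) (C : ℝ → ℝ)
    (hπ : πm ≤ πp) (hπm : 0 ≤ πm) (hπw : 0 ≤ πw)
    (hαh : 0 < αh) (hηh : 0 < ηh) (hαr : 0 < αr)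
    (hwlh : 0 ≤ wlh) (hwhb : wlh ≤ wuh) (hwlr : 0 ≤ wlr) (hwrb : wlr ≤ wur)
    (hC : StrictConvexOn ℝ univ C) (hCd : Differentiable ℝ C) (hCm : Monotone C)
    (Wfun : ℝ → ℝ)
    (hWfun : ∀ δ : ℝ, Wfun δ ∈ Icc wlh wuh ∧
      ∀ w ∈ Icc wlh wuh,
        (πw + δ / ηh) * w - C (w / αh) ≤ (πw + δ / ηh) * Wfun δ - C (Wfun δ / αh))
    (hmid1 : πm ≤ αr * πw) (hmid2 : αr * πw ≤ πp)
    (g : ℝ)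
    (hg1 : wlr / αr - Wfun πp / ηh ≤ g)
    (hg2 : g < wlr / αr - Wfun (αr * πw) / ηh) :
    ∀ wh ∈ Icc wlh wuh, ∀ wr ∈ Icc wlr wur,
      profit πw πp πm π0 αr αh ηh C wh wr g ≤
        profit πw πp πm π0 αr αh ηh C (clampR (ηh * (wlr / αr - g)) wlh wuh) wlr g := by
  intro wh hwh wr hwr
  set x := ηh * (wlr / αr - g) with hxdef
  have hW1 := hWfun πp
  have hW2 := hWfun (αr * πw)
  have hηne : (ηh : ℝ) ≠ 0 := ne_of_gt hηh
  have hxub : x ≤ Wfun πp := by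
    have h1 : wlr / αr - g ≤ Wfun πp / ηh := by linarith
    have h2 := mul_le_mul_of_nonneg_left h1 hηh.le
    have h3 : ηh * (Wfun πp / ηh) = Wfun πp := by field_simp
    rw [h3] at h2; exact h2
  have hxlb : Wfun (αr * πw) ≤ x := by
    have h1 : Wfun (αr * πw) / ηh ≤ wlr / αr - g := by linarith
    have h2 := mul_le_mul_of_nonneg_left h1 hηh.le
    have h3 : ηh * (Wfun (αr * πw) / ηh) = Wfun (αr * πw) := by field_simp
    rw [h3] at h2; exact h2
  have hxl : wlh ≤ x := le_trans hW2.1.1 hxlb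
  have hxu : x ≤ wuh := le_trans hxub hW1.1.2
  have hclamp : clampR (ηh * (wlr / αr - g)) wlh wuh = x := by
    rw [← hxdef]; unfold clampR
    rw [min_eq_left hxu, max_eq_right hxl]
  rw [hclamp]
  have hxη : x / ηh = wlr / αr - g := by rw [hxdef]; field_simp
  have hzx : netz αr ηh x wlr g = 0 := by unfold netz; rw [hxη]; ring
  have hPstar : profit πw πp πm π0 αr αh ηh C x wlr g
      = πw * (x + wlr) - π0 - C (x / αh) := by
    unfold profit epay; rw [hzx]; norm_num
  rw [hPstar]
  rcases le_total wh x with hcase | hcase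
  · -- wh ≤ x : use lam = πp
    have hrel := profit_le_relax πw πp πm π0 αr αh ηh πp C wh wr g hπ le_rfl
    have hseg : x ∈ segment ℝ wh (Wfun πp) := by
      rw [segment_eq_Icc (le_trans hcase hxub)]; exact ⟨hcase, hxub⟩
    have hG := concave_side C hC.convexOn (πw + πp / ηh) αh wh x (Wfun πp) hseg
      (hW1.2 wh hwh)
    refine le_trans hrel ?_
    have := final_step πw π0 αr αh ηh πp C wh wr x wlr g hαr hG hxη hmid2 hwr.1
    simpa [netz] using this
  · -- x ≤ wh : use lam = αr * πw
    have hrel := profit_le_relax πw πp πm π0 αr αh ηh (αr * πw) C wh wr g hmid1 hmid2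
    have hseg : x ∈ segment ℝ wh (Wfun (αr * πw)) := by
      rw [segment_symm, segment_eq_Icc (le_trans hxlb hcase)]; exact ⟨hxlb, hcase⟩
    have hG := concave_side C hC.convexOn (πw + (αr * πw) / ηh) αh wh x (Wfun (αr * πw)) hseg
      (hW2.2 wh hwh)
    refine le_trans hrel ?_
    have := final_step πw π0 αr αh ηh (αr * πw) C wh wr x wlr g hαr hG hxη le_rfl hwr.1
    simpa [netz] using this
end
end

section
/- Assume π⁻ ≤ α_r·πʷ ≤ π⁺ and Γ_NZ1 ≤ g ≤ Γ_NZ2. Then the point (w_h^NZ, α_r·(w_h^NZ/η_h + g)) lies in the feasible set F and maximizes the profit over F: for all (w_h, w_r) ∈ F, Π(w_h, w_r, g) ≤ Π(w_h^NZ, α_r·(w_h^NZ/η_h + g), g). -/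
open Set

noncomputable section

lemma mul_le_mul_max_add_mul_min {πp πm p : ℝ} (hm : πm ≤ p) (hp : p ≤ πp) (z : ℝ) :
    p * z ≤ πp * max z 0 + πm * min z 0 := by
  have hmax : p * max z 0 ≤ πp * max z 0 := mul_le_mul_of_nonneg_right hp (le_max_right z 0)
  have hmin : p * min z 0 ≤ πm * min z 0 := mul_le_mul_of_nonpos_right hm (min_le_right z 0)
  calc p * z = p * max z 0 + p * min z 0 := by rw [← mul_add, max_add_min, add_zero]
    _ ≤ πp * max z 0 + πm * min z 0 := add_le_add hmax hmin

/-- Pricing all exchanged electricity at the water-equivalent rate `αr * πw` removes the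
dependence on `wr` and bounds the profit above. -/
lemma profit_le {πw πp πm π0 αr αh ηh : ℝ} {C : ℝ → ℝ} (hαr : αr ≠ 0)
    (hm : πm ≤ αr * πw) (hp : αr * πw ≤ πp) (wh wr g : ℝ) :
    profit πw πp πm π0 αr αh ηh C wh wr g ≤
      (πw + αr * πw / ηh) * wh - C (wh / αh) + αr * πw * g - π0 := by
  have hpay := mul_le_mul_max_add_mul_min hm hp (netz αr ηh wh wr g)
  have hwr : αr * (wr / αr) = wr := mul_div_cancel₀ wr hαr
  unfold profit epay netz at *
  linear_combination hpay - πw * hwr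

lemma netz_eq_zero {αr ηh : ℝ} (hαr : αr ≠ 0) (wh g : ℝ) :
    netz αr ηh wh (αr * (wh / ηh + g)) g = 0 := by
  unfold netz
  field_simp
  ring

lemma profit_of_netz_eq_zero {πw πp πm π0 αr αh ηh : ℝ} {C : ℝ → ℝ} (hαr : αr ≠ 0)
    (wh g : ℝ) :
    profit πw πp πm π0 αr αh ηh C wh (αr * (wh / ηh + g)) g =
      (πw + αr * πw / ηh) * wh - C (wh / αh) + αr * πw * g - π0 := by
  unfold profit epay
  rw [netz_eq_zero hαr]
  simp only [max_self, min_self, mul_zero]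
  ring

lemma mul_add_mem_Icc {αr ηh wlr wur w g : ℝ} (hαr : 0 < αr)
    (hg1 : wlr / αr - w / ηh ≤ g) (hg2 : g ≤ wur / αr - w / ηh) :
    αr * (w / ηh + g) ∈ Icc wlr wur := by
  constructor
  · rw [← div_le_iff₀' hαr]
    linarith
  · rw [← le_div_iff₀' hαr]
    linarith

theorem optimal_dispatch_NZ_interior_general
    (πp πm π0 πw αh ηh αr wlh wuh wlr wur : ℝ) (C : ℝ → ℝ)
    (hαr : 0 < αr)
    (Wfun : ℝ → ℝ)
    (hWfun : ∀ δ : ℝ, Wfun δ ∈ Icc wlh wuh ∧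
      ∀ w ∈ Icc wlh wuh,
        (πw + δ / ηh) * w - C (w / αh) ≤ (πw + δ / ηh) * Wfun δ - C (Wfun δ / αh))
    (hmid1 : πm ≤ αr * πw) (hmid2 : αr * πw ≤ πp)
    (g : ℝ)
    (hg1 : wlr / αr - Wfun (αr * πw) / ηh ≤ g)
    (hg2 : g ≤ wur / αr - Wfun (αr * πw) / ηh) :
    (Wfun (αr * πw) ∈ Icc wlh wuh ∧
      αr * (Wfun (αr * πw) / ηh + g) ∈ Icc wlr wur) ∧
    ∀ wh ∈ Icc wlh wuh, ∀ wr ∈ Icc wlr wur,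
      profit πw πp πm π0 αr αh ηh C wh wr g ≤
        profit πw πp πm π0 αr αh ηh C (Wfun (αr * πw)) (αr * (Wfun (αr * πw) / ηh + g)) g := by
  obtain ⟨hmem, hopt⟩ := hWfun (αr * πw)
  refine ⟨⟨hmem, mul_add_mem_Icc hαr hg1 hg2⟩, fun wh hwh wr _ => ?_⟩
  rw [profit_of_netz_eq_zero hαr.ne']
  calc profit πw πp πm π0 αr αh ηh C wh wr g
      ≤ (πw + αr * πw / ηh) * wh - C (wh / αh) + αr * πw * g - π0 :=
        profit_le hαr.ne' hmid1 hmid2 wh wr g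
    _ ≤ _ := by linarith [hopt wh hwh]

/-- interior net-zero region Γ_NZ1 ≤ g ≤ Γ_NZ2. -/
theorem optimal_dispatch_NZ_interior
    (πp πm π0 πw αh ηh αr wlh wuh wlr wur : ℝ) (C : ℝ → ℝ)
    (hπ : πm ≤ πp) (hπm : 0 ≤ πm) (hπw : 0 ≤ πw)
    (hαh : 0 < αh) (hηh : 0 < ηh) (hαr : 0 < αr)
    (hwlh : 0 ≤ wlh) (hwhb : wlh ≤ wuh) (hwlr : 0 ≤ wlr) (hwrb : wlr ≤ wur)
    (hC : StrictConvexOn ℝ univ C) (hCd : Differentiable ℝ C) (hCm : Monotone C)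
    (Wfun : ℝ → ℝ)
    (hWfun : ∀ δ : ℝ, Wfun δ ∈ Icc wlh wuh ∧
      ∀ w ∈ Icc wlh wuh,
        (πw + δ / ηh) * w - C (w / αh) ≤ (πw + δ / ηh) * Wfun δ - C (Wfun δ / αh))
    (hmid1 : πm ≤ αr * πw) (hmid2 : αr * πw ≤ πp)
    (g : ℝ)
    (hg1 : wlr / αr - Wfun (αr * πw) / ηh ≤ g)
    (hg2 : g ≤ wur / αr - Wfun (αr * πw) / ηh) :
    (Wfun (αr * πw) ∈ Icc wlh wuh ∧
      αr * (Wfun (αr * πw) / ηh + g) ∈ Icc wlr wur) ∧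
    ∀ wh ∈ Icc wlh wuh, ∀ wr ∈ Icc wlr wur,
      profit πw πp πm π0 αr αh ηh C wh wr g ≤
        profit πw πp πm π0 αr αh ηh C (Wfun (αr * πw)) (αr * (Wfun (αr * πw) / ηh + g)) g :=
  optimal_dispatch_NZ_interior_general πp πm π0 πw αh ηh αr wlh wuh wlr wur C hαr Wfun hWfun hmid1
    hmid2 g hg1 hg2
end
end

section
/- Assume π⁻ ≤ α_r·πʷ ≤ π⁺ and Γ_NZ2 < g ≤ Γ_EX. Then the point (clamp(η_h·(w̄_r/α_r − g), w̲_h, w̄_h), w̄_r) maximizes the profit over the feasible set: for all (w_h, w_r) ∈ F, Π(w_h, w_r, g) ≤ Π(clamp(η_h·(w̄_r/α_r − g), w̲_h, w̄_h), w̄_r, g). -/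
open Set

noncomputable section

/-- Gradient inequality for convex differentiable functions on ℝ. -/
theorem grad_ineq_aux {C : ℝ → ℝ} (hC : ConvexOn ℝ Set.univ C) (hCd : Differentiable ℝ C)
    (x y : ℝ) : C x + deriv C x * (y - x) ≤ C y := by
  rcases lt_trichotomy x y with h | h | h
  · have := hC.deriv_le_slope (Set.mem_univ x) (Set.mem_univ y) h (hCd x)
    rw [slope_def_field] at this
    have hxy : 0 < y - x := by linarith
    rw [le_div_iff₀ hxy] at this
    linarith
  · simp [h]
  · have := hC.slope_le_deriv (Set.mem_univ y) (Set.mem_univ x) h (hCd x)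
    rw [slope_def_field] at this
    have hxy : 0 < x - y := by linarith
    rw [div_le_iff₀ hxy] at this
    linarith

set_option maxHeartbeats 1000000 in
/-- upper net-zero boundary region Γ_NZ2 < g ≤ Γ_EX. -/

theorem optimal_dispatch_NZ_upper
    (πp πm π0 πw αh ηh αr wlh wuh wlr wur : ℝ) (C : ℝ → ℝ)
    (hπ : πm ≤ πp) (hπm : 0 ≤ πm) (hπw : 0 ≤ πw)
    (hαh : 0 < αh) (hηh : 0 < ηh) (hαr : 0 < αr)
    (hwlh : 0 ≤ wlh) (hwhb : wlh ≤ wuh) (hwlr : 0 ≤ wlr) (hwrb : wlr ≤ wur)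
    (hC : StrictConvexOn ℝ univ C) (hCd : Differentiable ℝ C) (hCm : Monotone C)
    (Wfun : ℝ → ℝ)
    (hWfun : ∀ δ : ℝ, Wfun δ ∈ Icc wlh wuh ∧
      ∀ w ∈ Icc wlh wuh,
        (πw + δ / ηh) * w - C (w / αh) ≤ (πw + δ / ηh) * Wfun δ - C (Wfun δ / αh))
    (hmid1 : πm ≤ αr * πw) (hmid2 : αr * πw ≤ πp)
    (g : ℝ)
    (hg1 : wur / αr - Wfun (αr * πw) / ηh < g)
    (hg2 : g ≤ wur / αr - Wfun πm / ηh) :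
    ∀ wh ∈ Icc wlh wuh, ∀ wr ∈ Icc wlr wur,
      profit πw πp πm π0 αr αh ηh C wh wr g ≤
        profit πw πp πm π0 αr αh ηh C (clampR (ηh * (wur / αr - g)) wlh wuh) wur g := by
  intro wh hwh wr hwr
  have hηh' : ηh ≠ 0 := ne_of_gt hηh
  have hαr' : αr ≠ 0 := ne_of_gt hαr
  set w0 : ℝ := ηh * (wur / αr - g) with hw0
  obtain ⟨hWm_mem, hWm_max⟩ := hWfun πm
  obtain ⟨hWz_mem, hWz_max⟩ := hWfun (αr * πw)
  have hw0div : w0 / ηh = wur / αr - g := by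
    rw [hw0, mul_comm, mul_div_assoc, div_self hηh', mul_one]
  -- position of w0
  have hw0lt : w0 < Wfun (αr * πw) := by
    have h1 : wur / αr - g < Wfun (αr * πw) / ηh := by linarith
    have := (mul_lt_mul_iff_right₀ hηh).mpr h1
    rw [mul_div_cancel₀ _ hηh'] at this
    linarith [this]
  have hw0ge : Wfun πm ≤ w0 := by
    have h1 : Wfun πm / ηh ≤ wur / αr - g := by linarith
    have := (mul_le_mul_iff_right₀ hηh).mpr h1
    rw [mul_div_cancel₀ _ hηh'] at this
    linarith [this]
  clear_value w0
  have hw0mem : w0 ∈ Icc wlh wuh := ⟨hWm_mem.1.trans hw0ge, hw0lt.le.trans hWz_mem.2⟩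
  have hclamp : clampR w0 wlh wuh = w0 := by
    unfold clampR
    rw [min_eq_left hw0mem.2, max_eq_right hw0mem.1]
  have hz0 : netz αr ηh w0 wur g = 0 := by
    unfold netz; rw [hw0div]; ring
  have hepay : epay πp πm π0 αr ηh w0 wur g = π0 := by
    unfold epay; rw [hz0]; simp
  -- the key multiplier lam
  have hconv : ConvexOn ℝ Set.univ C := hC.convexOn
  have key : ∃ lam : ℝ, πm ≤ lam ∧ lam ≤ αr * πw ∧
      ∀ w ∈ Icc wlh wuh,
        (πw + lam / ηh) * w - C (w / αh) ≤ (πw + lam / ηh) * w0 - C (w0 / αh) := by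
    rcases eq_or_lt_of_le hw0ge with heq | hlt
    · exact ⟨πm, le_refl _, hmid1, by rw [← heq]; exact hWm_max⟩
    · obtain ⟨d, hd⟩ : ∃ d : ℝ, d = deriv C (w0 / αh) := ⟨_, rfl⟩
      refine ⟨ηh * (d / αh - πw), ?_, ?_, ?_⟩
      · have hgrad := grad_ineq_aux hconv hCd (w0 / αh) (Wfun πm / αh)
        rw [← hd] at hgrad
        have hmax := hWm_max w0 hw0mem
        have h2 : C (w0 / αh) - C (Wfun πm / αh) ≤ d / αh * (w0 - Wfun πm) := by
          have he : d * (Wfun πm / αh - w0 / αh) = -(d / αh * (w0 - Wfun πm)) := by ring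
          rw [he] at hgrad; linarith
        have h3 : (πw + πm / ηh) * (w0 - Wfun πm) ≤ d / αh * (w0 - Wfun πm) := by
          nlinarith [h2, hmax]
        have h4 : πw + πm / ηh ≤ d / αh :=
          le_of_mul_le_mul_right (by linarith [h3]) (by linarith : (0:ℝ) < w0 - Wfun πm)
        have h5 : πm / ηh ≤ d / αh - πw := by linarith
        calc πm = ηh * (πm / ηh) := by field_simp
          _ ≤ ηh * (d / αh - πw) := mul_le_mul_of_nonneg_left h5 (le_of_lt hηh)
      · have hgrad := grad_ineq_aux hconv hCd (w0 / αh) (Wfun (αr * πw) / αh)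
        rw [← hd] at hgrad
        have hmax := hWz_max w0 hw0mem
        have h2 : d / αh * (Wfun (αr * πw) - w0) ≤ C (Wfun (αr * πw) / αh) - C (w0 / αh) := by
          have he : d * (Wfun (αr * πw) / αh - w0 / αh) = d / αh * (Wfun (αr * πw) - w0) := by
            ring
          rw [he] at hgrad; linarith
        have h3 : d / αh * (Wfun (αr * πw) - w0) ≤
            (πw + αr * πw / ηh) * (Wfun (αr * πw) - w0) := by
          nlinarith [h2, hmax]
        have h4 : d / αh ≤ πw + αr * πw / ηh :=
          le_of_mul_le_mul_right (by linarith [h3]) (by linarith : (0:ℝ) < Wfun (αr * πw) - w0)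
        have h5 : d / αh - πw ≤ αr * πw / ηh := by linarith
        calc ηh * (d / αh - πw) ≤ ηh * (αr * πw / ηh) :=
              mul_le_mul_of_nonneg_left h5 (le_of_lt hηh)
          _ = αr * πw := by field_simp
      · intro w hw
        have hgrad := grad_ineq_aux hconv hCd (w0 / αh) (w / αh)
        rw [← hd] at hgrad
        have hcoef : πw + ηh * (d / αh - πw) / ηh = d / αh := by field_simp; ring
        rw [hcoef]
        have he : d * (w / αh - w0 / αh) = d / αh * w - d / αh * w0 := by ring
        rw [he] at hgrad
        linarith
  obtain ⟨lam, hlam1, hlam2, hlamkey⟩ := key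
  -- bound on the payment: lam * z ≤ πp max(z,0) + πm min(z,0)
  have hpay : ∀ z : ℝ, lam * z ≤ πp * max z 0 + πm * min z 0 := by
    intro z
    rcases le_or_gt 0 z with hz | hz
    · rw [max_eq_left hz, min_eq_right hz]
      nlinarith [mul_le_mul_of_nonneg_right (hlam2.trans hmid2) hz]
    · rw [max_eq_right hz.le, min_eq_left hz.le]
      nlinarith [mul_le_mul_of_nonpos_right hlam1 hz.le]
  -- now the chain
  rw [hclamp]
  have step1 : profit πw πp πm π0 αr αh ηh C wh wr g ≤
      πw * (wh + wr) - lam * (wr / αr - wh / ηh - g) - π0 - C (wh / αh) := by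
    unfold profit epay netz
    have := hpay (wr / αr - wh / ηh - g)
    linarith
  have step2 : πw * (wh + wr) - lam * (wr / αr - wh / ηh - g) - π0 - C (wh / αh)
      = ((πw + lam / ηh) * wh - C (wh / αh)) + (πw - lam / αr) * wr + lam * g - π0 := by
    ring
  have h2 := hlamkey wh hwh
  have h3 : (πw - lam / αr) * wr ≤ (πw - lam / αr) * wur := by
    apply mul_le_mul_of_nonneg_left hwr.2
    have : lam / αr ≤ πw := by
      rw [div_le_iff₀ hαr]; linarith [hlam2]
    linarith
  have step4 : ((πw + lam / ηh) * w0 - C (w0 / αh)) + (πw - lam / αr) * wur + lam * g - π0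
      = profit πw πp πm π0 αr αh ηh C w0 wur g := by
    unfold profit
    rw [hepay]
    have hlw : lam / ηh * w0 = lam * (wur / αr - g) := by
      rw [← hw0div]; field_simp
    linear_combination hlw
  calc profit πw πp πm π0 αr αh ηh C wh wr g
      ≤ ((πw + lam / ηh) * wh - C (wh / αh)) + (πw - lam / αr) * wr + lam * g - π0 := by
        rw [← step2]; exact step1
    _ ≤ ((πw + lam / ηh) * w0 - C (w0 / αh)) + (πw - lam / αr) * wur + lam * g - π0 := by
        linarith
    _ = profit πw πp πm π0 αr αh ηh C w0 wur g := step4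
end
end

section
/- Assume π⁻ ≤ α_r·πʷ ≤ π⁺. Then the four thresholds satisfy the ordering Γ_IM ≤ Γ_NZ1 ≤ Γ_NZ2 ≤ Γ_EX. -/
open Set

noncomputable section

/-! A larger marginal price can only raise the optimal TDP output, whatever the cost: adding the
optimality inequalities of the maximizers `x` (price `a`) and `y` (price `b`) gives
`(b - a) * (x - y) ≤ 0`. So `π⁻ ≤ α_r πʷ ≤ π⁺` orders `w_h^EX ≤ w_h^NZ ≤ w_h^IM`, and each threshold
is a water bound over `α_r` minus such an output over `η_h`. -/

theorem le_of_isMaxOn_mul_sub {S : Set ℝ} {c : ℝ → ℝ} {a b x y : ℝ} (hab : a < b)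
    (hx : x ∈ S) (hy : y ∈ S) (hxmax : IsMaxOn (fun w => a * w - c w) S x)
    (hymax : IsMaxOn (fun w => b * w - c w) S y) : x ≤ y := by
  have hxy : a * y - c y ≤ a * x - c x := isMaxOn_iff.mp hxmax y hy
  have hyx : b * x - c x ≤ b * y - c y := isMaxOn_iff.mp hymax x hx
  have key : (b - a) * (x - y) ≤ 0 := by linarith
  by_contra! hlt
  exact (mul_pos (sub_pos.mpr hab) (sub_pos.mpr hlt)).not_ge key

theorem monotone_of_isMaxOn_mul_sub {S : Set ℝ} {c u W : ℝ → ℝ} (hu : StrictMono u)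
    (hW : ∀ δ, W δ ∈ S ∧ IsMaxOn (fun w => u δ * w - c w) S (W δ)) : Monotone W := by
  intro δ₁ δ₂ h
  rcases h.eq_or_lt with rfl | hlt
  · exact le_rfl
  · exact le_of_isMaxOn_mul_sub (hu hlt) (hW δ₁).1 (hW δ₂).1 (hW δ₁).2 (hW δ₂).2

theorem threshold_ordering_general
    (πp πm πw αh ηh αr wlh wuh wlr wur : ℝ) (C : ℝ → ℝ)
    (hηh : 0 < ηh) (hαr : 0 < αr)
    (hwrb : wlr ≤ wur)
    (Wfun : ℝ → ℝ)
    (hWfun : ∀ δ : ℝ, Wfun δ ∈ Icc wlh wuh ∧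
      ∀ w ∈ Icc wlh wuh,
        (πw + δ / ηh) * w - C (w / αh) ≤ (πw + δ / ηh) * Wfun δ - C (Wfun δ / αh))
    (hmid1 : πm ≤ αr * πw) (hmid2 : αr * πw ≤ πp) :
    wlr / αr - Wfun πp / ηh ≤ wlr / αr - Wfun (αr * πw) / ηh ∧
    wlr / αr - Wfun (αr * πw) / ηh ≤ wur / αr - Wfun (αr * πw) / ηh ∧
    wur / αr - Wfun (αr * πw) / ηh ≤ wur / αr - Wfun πm / ηh := by
  have hprice : StrictMono fun δ : ℝ => πw + δ / ηh := fun _ _ h =>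
    add_lt_add_right (div_lt_div_of_pos_right h hηh) πw
  have hmono : Monotone Wfun :=
    monotone_of_isMaxOn_mul_sub hprice fun δ => ⟨(hWfun δ).1, isMaxOn_iff.mpr (hWfun δ).2⟩
  have hNZ_le_IM : Wfun (αr * πw) ≤ Wfun πp := hmono hmid2
  have hEX_le_NZ : Wfun πm ≤ Wfun (αr * πw) := hmono hmid1
  exact ⟨by gcongr, by gcongr, by gcongr⟩

/-- ordering of the four thresholds. -/
theorem threshold_ordering
    (πp πm π0 πw αh ηh αr wlh wuh wlr wur : ℝ) (C : ℝ → ℝ)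
    (hπ : πm ≤ πp) (hπm : 0 ≤ πm) (hπw : 0 ≤ πw)
    (hαh : 0 < αh) (hηh : 0 < ηh) (hαr : 0 < αr)
    (hwlh : 0 ≤ wlh) (hwhb : wlh ≤ wuh) (hwlr : 0 ≤ wlr) (hwrb : wlr ≤ wur)
    (hC : StrictConvexOn ℝ univ C) (hCd : Differentiable ℝ C) (hCm : Monotone C)
    (Wfun : ℝ → ℝ)
    (hWfun : ∀ δ : ℝ, Wfun δ ∈ Icc wlh wuh ∧
      ∀ w ∈ Icc wlh wuh,
        (πw + δ / ηh) * w - C (w / αh) ≤ (πw + δ / ηh) * Wfun δ - C (Wfun δ / αh))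
    (hmid1 : πm ≤ αr * πw) (hmid2 : αr * πw ≤ πp) :
    wlr / αr - Wfun πp / ηh ≤ wlr / αr - Wfun (αr * πw) / ηh ∧
    wlr / αr - Wfun (αr * πw) / ηh ≤ wur / αr - Wfun (αr * πw) / ηh ∧
    wur / αr - Wfun (αr * πw) / ηh ≤ wur / αr - Wfun πm / ηh :=
  threshold_ordering_general πp πm πw αh ηh αr wlh wuh wlr wur C hηh hαr hwrb Wfun hWfun hmid1 hmid2
end
end

section
/- Assume α_r·πʷ < π⁻ (hence also α_r·πʷ < π⁺). Define Γ_IM^s := w̲_r/α_r − w_h^IM/η_h and Γ_EX^s := w̲_r/α_r − w_h^EX/η_h, and set w_h^s(g) := w_h^IM if g < Γ_IM^s; clamp(η_h·(w̲_r/α_r − g), w̲_h, w̄_h) if Γ_IM^s ≤ g ≤ Γ_EX^s; w_h^EX if g > Γ_EX^s. Then for every g, the point (w_h^s(g), w̲_r) maximizes the profit over the feasible set: for all (w_h, w_r) ∈ F, Π(w_h, w_r, g) ≤ Π(w_h^s(g), w̲_r, g). -/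
open Set

noncomputable section

/-- epay in terms of the min part. -/
lemma epay_eq_p (πp πm π0 αr ηh wh wr g : ℝ) :
    epay πp πm π0 αr ηh wh wr g =
      πp * netz αr ηh wh wr g - (πp - πm) * min (netz αr ηh wh wr g) 0 + π0 := by
  unfold epay
  linear_combination πp * max_add_min (netz αr ηh wh wr g) 0

/-- epay in terms of the max part. -/
lemma epay_eq_m (πp πm π0 αr ηh wh wr g : ℝ) :
    epay πp πm π0 αr ηh wh wr g =
      πm * netz αr ηh wh wr g + (πp - πm) * max (netz αr ηh wh wr g) 0 + π0 := by
  unfold epay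
  linear_combination πm * max_add_min (netz αr ηh wh wr g) 0

/-- For a "concave-type" function w ↦ k·w - C(w/αh) with C convex,
any midpoint value dominates the min of the endpoint values. -/
lemma gmid {C : ℝ → ℝ} (hC : ConvexOn ℝ Set.univ C) (k αh : ℝ) {a b c : ℝ}
    (hab : a ≤ b) (hbc : b ≤ c) :
    min (k * a - C (a / αh)) (k * c - C (c / αh)) ≤ k * b - C (b / αh) := by
  rcases eq_or_lt_of_le (hab.trans hbc) with h | h
  · have hba : b = a := le_antisymm (h ▸ hbc) hab
    subst hba
    have hca : c = b := le_antisymm (h ▸ hab) hbc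
    subst hca
    exact (min_self _).le
  · set t : ℝ := (c - b) / (c - a) with ht
    have hca : 0 < c - a := by linarith
    have ht0 : 0 ≤ t := div_nonneg (by linarith) hca.le
    have ht1 : t ≤ 1 := (div_le_one hca).2 (by linarith)
    have hb : b = t * a + (1 - t) * c := by
      field_simp [ht]
      rw [ht]; field_simp; ring
    have hconv := hC.2 (Set.mem_univ (a / αh)) (Set.mem_univ (c / αh)) ht0
      (by linarith : (0:ℝ) ≤ 1 - t) (by ring : t + (1 - t) = 1)
    simp only [smul_eq_mul] at hconv
    have harg : t * (a / αh) + (1 - t) * (c / αh) = b / αh := by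
      rw [hb]; ring
    rw [harg] at hconv
    have hmin1 : min (k * a - C (a / αh)) (k * c - C (c / αh)) ≤ k * a - C (a / αh) :=
      min_le_left _ _
    have hmin2 : min (k * a - C (a / αh)) (k * c - C (c / αh)) ≤ k * c - C (c / αh) :=
      min_le_right _ _
    have hkb : k * b = k * (t * a) + k * ((1 - t) * c) := by rw [hb]; ring
    nlinarith [mul_nonneg ht0 (sub_nonneg.2 hmin1),
      mul_nonneg (by linarith : (0:ℝ) ≤ 1 - t) (sub_nonneg.2 hmin2)]

/-- Profit is nonincreasing in the RODP output when α_r·πʷ ≤ π⁻. -/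
lemma wr_step (πp πm π0 πw αr αh ηh : ℝ) (C : ℝ → ℝ)
    (hπ : πm ≤ πp) (hαr : 0 < αr) (hsp : αr * πw ≤ πm)
    (wh g wlr wr : ℝ) (hwr : wlr ≤ wr) :
    profit πw πp πm π0 αr αh ηh C wh wr g ≤ profit πw πp πm π0 αr αh ηh C wh wlr g := by
  have hz : netz αr ηh wh wlr g ≤ netz αr ηh wh wr g := by
    unfold netz
    have : wlr / αr ≤ wr / αr := by gcongr
    linarith
  have hmax : max (netz αr ηh wh wlr g) 0 ≤ max (netz αr ηh wh wr g) 0 :=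
    max_le_max hz le_rfl
  have hzz : πm * netz αr ηh wh wr g - πm * netz αr ηh wh wlr g = πm * ((wr - wlr) / αr) := by
    unfold netz; ring
  have h0 : 0 ≤ wr - wlr := by linarith
  have hmul : πw * (wr - wlr) ≤ πm * ((wr - wlr) / αr) := by
    rw [← mul_div_assoc, le_div_iff₀ hαr]
    nlinarith [mul_le_mul_of_nonneg_right hsp h0]
  have hd := mul_le_mul_of_nonneg_left hmax (by linarith : (0:ℝ) ≤ πp - πm)
  unfold profit
  rw [epay_eq_m, epay_eq_m]
  linarith [hmul, hzz, hd]

/-- special tariff case α_r·πʷ < π⁻: RODP at minimum, TDP two-threshold. -/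
theorem special_tariff_low_water_price
    (πp πm π0 πw αh ηh αr wlh wuh wlr wur : ℝ) (C : ℝ → ℝ)
    (hπ : πm ≤ πp) (hπm : 0 ≤ πm) (hπw : 0 ≤ πw)
    (hαh : 0 < αh) (hηh : 0 < ηh) (hαr : 0 < αr)
    (hwlh : 0 ≤ wlh) (hwhb : wlh ≤ wuh) (hwlr : 0 ≤ wlr) (hwrb : wlr ≤ wur)
    (hC : StrictConvexOn ℝ univ C) (hCd : Differentiable ℝ C) (hCm : Monotone C)
    (Wfun : ℝ → ℝ)
    (hWfun : ∀ δ : ℝ, Wfun δ ∈ Icc wlh wuh ∧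
      ∀ w ∈ Icc wlh wuh,
        (πw + δ / ηh) * w - C (w / αh) ≤ (πw + δ / ηh) * Wfun δ - C (Wfun δ / αh))
    (hsp : αr * πw < πm) :
    ∀ g : ℝ,
      ∀ wh ∈ Icc wlh wuh, ∀ wr ∈ Icc wlr wur,
        profit πw πp πm π0 αr αh ηh C wh wr g ≤
          profit πw πp πm π0 αr αh ηh C
            (if g < wlr / αr - Wfun πp / ηh then Wfun πp
             else if g ≤ wlr / αr - Wfun πm / ηh then clampR (ηh * (wlr / αr - g)) wlh wuh
             else Wfun πm) wlr g := by
  intro g wh hwh wr hwr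
  obtain ⟨hWp, hWpmax⟩ := hWfun πp
  obtain ⟨hWm, hWmmax⟩ := hWfun πm
  have step1 : profit πw πp πm π0 αr αh ηh C wh wr g ≤
      profit πw πp πm π0 αr αh ηh C wh wlr g :=
    wr_step πp πm π0 πw αr αh ηh C hπ hαr hsp.le wh g wlr wr hwr.1
  refine step1.trans ?_
  -- two affine representations of profit at wr = wlr
  have eqp : ∀ w : ℝ, profit πw πp πm π0 αr αh ηh C w wlr g =
      ((πw + πp / ηh) * w - C (w / αh)) + (πw * wlr - πp * (wlr / αr - g) - π0)
        + (πp - πm) * min (netz αr ηh w wlr g) 0 := by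
    intro w
    unfold profit
    rw [epay_eq_p]
    unfold netz
    ring
  have eqm : ∀ w : ℝ, profit πw πp πm π0 αr αh ηh C w wlr g =
      ((πw + πm / ηh) * w - C (w / αh)) + (πw * wlr - πm * (wlr / αr - g) - π0)
        - (πp - πm) * max (netz αr ηh w wlr g) 0 := by
    intro w
    unfold profit
    rw [epay_eq_m]
    unfold netz
    ring
  have ubp : ∀ w : ℝ, profit πw πp πm π0 αr αh ηh C w wlr g ≤
      ((πw + πp / ηh) * w - C (w / αh)) + (πw * wlr - πp * (wlr / αr - g) - π0) := by
    intro w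
    rw [eqp w]
    nlinarith [mul_nonneg (sub_nonneg.2 hπ)
      (neg_nonneg.2 (min_le_right (netz αr ηh w wlr g) 0))]
  have ubm : ∀ w : ℝ, profit πw πp πm π0 αr αh ηh C w wlr g ≤
      ((πw + πm / ηh) * w - C (w / αh)) + (πw * wlr - πm * (wlr / αr - g) - π0) := by
    intro w
    rw [eqm w]
    nlinarith [mul_nonneg (sub_nonneg.2 hπ) (le_max_right (netz αr ηh w wlr g) 0)]
  split_ifs with h1 h2
  · -- import regime: g < Γ_IM, candidate Wfun πp
    have hz : 0 ≤ netz αr ηh (Wfun πp) wlr g := by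
      unfold netz; linarith
    rw [eqp (Wfun πp), min_eq_right hz]
    have h4 := hWpmax wh hwh
    have h6 := ubp wh
    linarith
  · -- net-zero regime
    push_neg at h1
    have hWm_le : Wfun πm ≤ ηh * (wlr / αr - g) := by
      have hh : Wfun πm / ηh ≤ wlr / αr - g := by linarith
      have := (div_le_iff₀ hηh).1 hh
      linarith
    have hWp_ge : ηh * (wlr / αr - g) ≤ Wfun πp := by
      have hh : wlr / αr - g ≤ Wfun πp / ηh := by linarith
      have := (le_div_iff₀ hηh).1 hh
      linarith
    have hclamp : clampR (ηh * (wlr / αr - g)) wlh wuh = ηh * (wlr / αr - g) := by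
      rw [clampR, min_eq_left (le_trans hWp_ge hWp.2),
        max_eq_right (le_trans hWm.1 hWm_le)]
    rw [hclamp]
    have hnb : netz αr ηh (ηh * (wlr / αr - g)) wlr g = 0 := by
      unfold netz
      field_simp
      ring
    rcases le_total wh (ηh * (wlr / αr - g)) with hcase | hcase
    · rw [eqp (ηh * (wlr / αr - g)), hnb]
      have h4 := hWpmax wh hwh
      have h5 : (πw + πp / ηh) * wh - C (wh / αh) ≤
          (πw + πp / ηh) * (ηh * (wlr / αr - g)) - C ((ηh * (wlr / αr - g)) / αh) := by
        have hg := gmid hC.convexOn (πw + πp / ηh) αh hcase hWp_ge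
        rwa [min_eq_left h4] at hg
      have h6 := ubp wh
      simp only [min_self]
      linarith
    · rw [eqm (ηh * (wlr / αr - g)), hnb]
      have h4 := hWmmax wh hwh
      have h5 : (πw + πm / ηh) * wh - C (wh / αh) ≤
          (πw + πm / ηh) * (ηh * (wlr / αr - g)) - C ((ηh * (wlr / αr - g)) / αh) := by
        have hg := gmid hC.convexOn (πw + πm / ηh) αh hWm_le hcase
        rwa [min_eq_right h4] at hg
      have h6 := ubm wh
      simp only [max_self]
      linarith
  · -- export regime: g > Γ_EX, candidate Wfun πm
    push_neg at h2
    have hz : netz αr ηh (Wfun πm) wlr g ≤ 0 := by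
      unfold netz; linarith
    rw [eqm (Wfun πm), max_eq_right hz]
    have h4 := hWmmax wh hwh
    have h6 := ubm wh
    linarith
end
end

section
/- Assume π⁺ = π⁻ = π (so w_h^IM = w_h^EX = W(π)). Then for every g: if α_r·πʷ > π, the point (W(π), w̄_r) maximizes the profit over the feasible set F, and if α_r·πʷ < π, the point (W(π), w̲_r) maximizes the profit over F. -/
open Set

noncomputable section

/-!
With a single price π the payment π·max(z, 0) + π·min(z, 0) + π⁰ is the affine function π·z + π⁰
of the net exchange z, so the profit splits into the TDP objective (πʷ + π/η_h)·w_h − C(w_h/α_h),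
maximized by W(π), plus the linear RODP term (πʷ − π/α_r)·w_r, maximized at w̄_r or w̲_r according
to the sign of its slope, plus a constant.
-/

theorem epay_single_price (π π0 αr ηh wh wr g : ℝ) :
    epay π π π0 αr ηh wh wr g = π * netz αr ηh wh wr g + π0 := by
  rw [epay, ← mul_add, max_add_min, add_zero]

theorem profit_single_price (πw π π0 αr αh ηh : ℝ) (C : ℝ → ℝ) (wh wr g : ℝ) :
    profit πw π π π0 αr αh ηh C wh wr g =
      ((πw + π / ηh) * wh - C (wh / αh)) + (πw - π / αr) * wr + (π * g - π0) := by
  rw [profit, epay_single_price, netz]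
  ring

theorem special_tariff_single_price_general
    (πp πm π0 πw αh ηh αr wlh wuh wlr wur : ℝ) (C : ℝ → ℝ)
    (hαr : 0 < αr)
    (Wfun : ℝ → ℝ)
    (hWfun : ∀ δ : ℝ, Wfun δ ∈ Icc wlh wuh ∧
      ∀ w ∈ Icc wlh wuh,
        (πw + δ / ηh) * w - C (w / αh) ≤ (πw + δ / ηh) * Wfun δ - C (Wfun δ / αh))
    (π : ℝ) (hp : πp = π) (hm : πm = π) :
    ∀ g : ℝ,
      (π < αr * πw →
        ∀ wh ∈ Icc wlh wuh, ∀ wr ∈ Icc wlr wur,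
          profit πw πp πm π0 αr αh ηh C wh wr g ≤
            profit πw πp πm π0 αr αh ηh C (Wfun π) wur g) ∧
      (αr * πw < π →
        ∀ wh ∈ Icc wlh wuh, ∀ wr ∈ Icc wlr wur,
          profit πw πp πm π0 αr αh ηh C wh wr g ≤
            profit πw πp πm π0 αr αh ηh C (Wfun π) wlr g) := by
  intro g
  simp only [hp, hm, profit_single_price]
  constructor
  · intro hlt wh hwh wr hwr
    have hslope : 0 ≤ πw - π / αr := sub_nonneg.2 ((div_le_iff₀ hαr).2 (by linarith))
    have hwh_opt := (hWfun π).2 wh hwh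
    have hwr_opt := mul_le_mul_of_nonneg_left hwr.2 hslope
    linarith
  · intro hlt wh hwh wr hwr
    have hslope : πw - π / αr ≤ 0 := sub_nonpos.2 ((le_div_iff₀ hαr).2 (by linarith))
    have hwh_opt := (hWfun π).2 wh hwh
    have hwr_opt := mul_le_mul_of_nonpos_left hwr.1 hslope
    linarith

/-- single electricity price π⁺ = π⁻ = π. -/
theorem special_tariff_single_price
    (πp πm π0 πw αh ηh αr wlh wuh wlr wur : ℝ) (C : ℝ → ℝ)
    (hπ : πm ≤ πp) (hπm : 0 ≤ πm) (hπw : 0 ≤ πw)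
    (hαh : 0 < αh) (hηh : 0 < ηh) (hαr : 0 < αr)
    (hwlh : 0 ≤ wlh) (hwhb : wlh ≤ wuh) (hwlr : 0 ≤ wlr) (hwrb : wlr ≤ wur)
    (hC : StrictConvexOn ℝ univ C) (hCd : Differentiable ℝ C) (hCm : Monotone C)
    (Wfun : ℝ → ℝ)
    (hWfun : ∀ δ : ℝ, Wfun δ ∈ Icc wlh wuh ∧
      ∀ w ∈ Icc wlh wuh,
        (πw + δ / ηh) * w - C (w / αh) ≤ (πw + δ / ηh) * Wfun δ - C (Wfun δ / αh))
    (π : ℝ) (hp : πp = π) (hm : πm = π) :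
    ∀ g : ℝ,
      (π < αr * πw →
        ∀ wh ∈ Icc wlh wuh, ∀ wr ∈ Icc wlr wur,
          profit πw πp πm π0 αr αh ηh C wh wr g ≤
            profit πw πp πm π0 αr αh ηh C (Wfun π) wur g) ∧
      (αr * πw < π →
        ∀ wh ∈ Icc wlh wuh, ∀ wr ∈ Icc wlr wur,
          profit πw πp πm π0 αr αh ηh C wh wr g ≤
            profit πw πp πm π0 αr αh ηh C (Wfun π) wlr g) :=
  special_tariff_single_price_general πp πm π0 πw αh ηh αr wlh wuh wlr wur C hαr Wfun hWfun π hp hm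
end
end

section
/- RODP-only plant: assume π⁻ ≤ α_r·πʷ ≤ π⁺ and fix the TDP output at w_h = 0. Then for every g, the point w_r = clamp(α_r·g, w̲_r, w̄_r) maximizes the profit over the RODP range: for all w_r ∈ [w̲_r, w̄_r], Π(0, w_r, g) ≤ Π(0, clamp(α_r·g, w̲_r, w̄_r), g). -/
/-! With no TDP output the profit is, as a function of `w_r`, piecewise affine with a kink at
`w_r = α_r g`: to the left the plant exports, each unit of water earns `πʷ - π⁻/α_r ≥ 0`; to the
right it imports, and each unit earns `πʷ - π⁺/α_r ≤ 0`. A function increasing up to `c` and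
decreasing after it is maximized over `[a, b]` at the projection `clamp(c, a, b)` of `c`. -/

open Set

noncomputable section

theorem le_clampR_of_monotoneOn_of_antitoneOn {f : ℝ → ℝ} {a b c w : ℝ}
    (hmono : MonotoneOn f (Iic c)) (hanti : AntitoneOn f (Ici c)) (hw : w ∈ Icc a b) :
    f w ≤ f (clampR c a b) := by
  obtain ⟨haw, hwb⟩ := hw
  rcases le_total c a with hca | hac
  · rw [clampR, min_eq_left (hca.trans (haw.trans hwb)), max_eq_left hca]
    exact hanti hca (hca.trans haw) haw
  rcases le_total b c with hbc | hcb
  · rw [clampR, min_eq_right hbc, max_eq_right (haw.trans hwb)]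
    exact hmono (hwb.trans hbc) hbc hwb
  rw [clampR, min_eq_left hcb, max_eq_right hac]
  rcases le_total w c with hwc | hcw
  · exact hmono hwc (mem_Iic.2 le_rfl) hwc
  · exact hanti (mem_Ici.2 le_rfl) hcw hcw

section RODPOnly

variable {πw πp πm π0 αr αh ηh : ℝ} {C : ℝ → ℝ} {g wr : ℝ}

theorem profit_zero_of_le (hαr : 0 < αr) (hwr : wr ≤ αr * g) :
    profit πw πp πm π0 αr αh ηh C 0 wr g = (πw - πm / αr) * wr + (πm * g - π0 - C 0) := by
  have hz : netz αr ηh 0 wr g ≤ 0 := by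
    simp only [netz, zero_div, sub_zero, sub_nonpos]
    exact (div_le_iff₀' hαr).2 hwr
  simp only [profit, epay, max_eq_right hz, min_eq_left hz]
  simp only [netz, zero_div]
  ring

theorem profit_zero_of_ge (hαr : 0 < αr) (hwr : αr * g ≤ wr) :
    profit πw πp πm π0 αr αh ηh C 0 wr g = (πw - πp / αr) * wr + (πp * g - π0 - C 0) := by
  have hz : 0 ≤ netz αr ηh 0 wr g := by
    simp only [netz, zero_div, sub_zero, sub_nonneg]
    exact (le_div_iff₀' hαr).2 hwr
  simp only [profit, epay, max_eq_left hz, min_eq_right hz]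
  simp only [netz, zero_div]
  ring

theorem monotoneOn_profit_zero (hαr : 0 < αr) (hm : πm ≤ αr * πw) :
    MonotoneOn (profit πw πp πm π0 αr αh ηh C 0 · g) (Iic (αr * g)) := by
  intro x hx y hy hxy
  dsimp only
  have hslope : 0 ≤ πw - πm / αr := sub_nonneg.2 ((div_le_iff₀' hαr).2 hm)
  rw [profit_zero_of_le hαr hx, profit_zero_of_le hαr hy]
  gcongr

theorem antitoneOn_profit_zero (hαr : 0 < αr) (hp : αr * πw ≤ πp) :
    AntitoneOn (profit πw πp πm π0 αr αh ηh C 0 · g) (Ici (αr * g)) := by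
  intro x hx y hy hxy
  dsimp only
  have hslope : πw - πp / αr ≤ 0 := sub_nonpos.2 ((le_div_iff₀' hαr).2 hp)
  rw [profit_zero_of_ge hαr hx, profit_zero_of_ge hαr hy]
  linarith [mul_le_mul_of_nonpos_left hxy hslope]

end RODPOnly

theorem rodp_only_dispatch_general
    (πp πm π0 πw αh ηh αr wlr wur : ℝ) (C : ℝ → ℝ)
    (hαr : 0 < αr)
    (hmid1 : πm ≤ αr * πw) (hmid2 : αr * πw ≤ πp) :
    ∀ g : ℝ, ∀ wr ∈ Icc wlr wur,
      profit πw πp πm π0 αr αh ηh C 0 wr g ≤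
        profit πw πp πm π0 αr αh ηh C 0 (clampR (αr * g) wlr wur) g :=
  fun _ _ hwr => le_clampR_of_monotoneOn_of_antitoneOn
    (monotoneOn_profit_zero hαr hmid1) (antitoneOn_profit_zero hαr hmid2) hwr

/-- RODP-only plant (w_h = 0): clamp(α_r·g) is optimal. -/
theorem rodp_only_dispatch
    (πp πm π0 πw αh ηh αr wlh wuh wlr wur : ℝ) (C : ℝ → ℝ)
    (hπ : πm ≤ πp) (hπm : 0 ≤ πm) (hπw : 0 ≤ πw)
    (hαh : 0 < αh) (hηh : 0 < ηh) (hαr : 0 < αr)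
    (hwlh : 0 ≤ wlh) (hwhb : wlh ≤ wuh) (hwlr : 0 ≤ wlr) (hwrb : wlr ≤ wur)
    (hC : StrictConvexOn ℝ univ C) (hCd : Differentiable ℝ C) (hCm : Monotone C)
    (hmid1 : πm ≤ αr * πw) (hmid2 : αr * πw ≤ πp) :
    ∀ g : ℝ, ∀ wr ∈ Icc wlr wur,
      profit πw πp πm π0 αr αh ηh C 0 wr g ≤
        profit πw πp πm π0 αr αh ηh C 0 (clampR (αr * g) wlr wur) g :=
  rodp_only_dispatch_general πp πm π0 πw αh ηh αr wlr wur C hαr hmid1 hmid2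
end
end

section
/- TDP-only plant: fix the RODP output at w_r = 0 and assume g ≥ 0. Then the point w_h = w_h^EX maximizes the profit over the TDP range: for all w_h ∈ [w̲_h, w̄_h], Π(w_h, 0, g) ≤ Π(w_h^EX, 0, g). -/
open Set

noncomputable section

/-! With no RODP load and nonnegative renewable generation the plant never imports, so the
payment is affine at the export price π⁻ and the profit differs from the objective defining
W(π⁻) by a constant. -/

section TdpOnly

variable {πw πp πm π0 αr αh ηh : ℝ} {C : ℝ → ℝ} {wh wr g : ℝ}

lemma epay_eq_of_netz_nonpos (hz : netz αr ηh wh wr g ≤ 0) :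
    epay πp πm π0 αr ηh wh wr g = πm * netz αr ηh wh wr g + π0 := by
  rw [epay, max_eq_right hz, min_eq_left hz, mul_zero, zero_add]

lemma netz_nonpos_of_rodp_zero (hηh : 0 ≤ ηh) (hwh : 0 ≤ wh) (hg : 0 ≤ g) : netz αr ηh wh 0 g ≤ 0 := by
  have : 0 ≤ wh / ηh := div_nonneg hwh hηh
  rw [netz, zero_div]
  linarith

lemma profit_eq_of_rodp_zero (hηh : 0 ≤ ηh) (hwh : 0 ≤ wh) (hg : 0 ≤ g) :
    profit πw πp πm π0 αr αh ηh C wh 0 g =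
      ((πw + πm / ηh) * wh - C (wh / αh)) + (πm * g - π0) := by
  rw [profit, epay_eq_of_netz_nonpos (netz_nonpos_of_rodp_zero hηh hwh hg), netz]
  ring

end TdpOnly

theorem tdp_only_dispatch_general
    (πp πm π0 πw αh ηh αr wlh wuh : ℝ) (C : ℝ → ℝ)
    (hηh : 0 < ηh)
    (hwlh : 0 ≤ wlh)
    (Wfun : ℝ → ℝ)
    (hWfun : ∀ δ : ℝ, Wfun δ ∈ Icc wlh wuh ∧
      ∀ w ∈ Icc wlh wuh,
        (πw + δ / ηh) * w - C (w / αh) ≤ (πw + δ / ηh) * Wfun δ - C (Wfun δ / αh))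
    (g : ℝ) (hg : 0 ≤ g) :
    ∀ wh ∈ Icc wlh wuh,
      profit πw πp πm π0 αr αh ηh C wh 0 g ≤
        profit πw πp πm π0 αr αh ηh C (Wfun πm) 0 g := by
  intro wh hwh
  obtain ⟨hWmem, hWopt⟩ := hWfun πm
  rw [profit_eq_of_rodp_zero hηh.le (hwlh.trans hwh.1) hg,
    profit_eq_of_rodp_zero hηh.le (hwlh.trans hWmem.1) hg]
  linarith [hWopt wh hwh]

/-- TDP-only plant (w_r = 0, g ≥ 0): w_h^EX is optimal. -/
theorem tdp_only_dispatch
    (πp πm π0 πw αh ηh αr wlh wuh wlr wur : ℝ) (C : ℝ → ℝ)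
    (hπ : πm ≤ πp) (hπm : 0 ≤ πm) (hπw : 0 ≤ πw)
    (hαh : 0 < αh) (hηh : 0 < ηh) (hαr : 0 < αr)
    (hwlh : 0 ≤ wlh) (hwhb : wlh ≤ wuh) (hwlr : 0 ≤ wlr) (hwrb : wlr ≤ wur)
    (hC : StrictConvexOn ℝ univ C) (hCd : Differentiable ℝ C) (hCm : Monotone C)
    (Wfun : ℝ → ℝ)
    (hWfun : ∀ δ : ℝ, Wfun δ ∈ Icc wlh wuh ∧
      ∀ w ∈ Icc wlh wuh,
        (πw + δ / ηh) * w - C (w / αh) ≤ (πw + δ / ηh) * Wfun δ - C (Wfun δ / αh))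
    (g : ℝ) (hg : 0 ≤ g) :
    ∀ wh ∈ Icc wlh wuh,
      profit πw πp πm π0 αr αh ηh C wh 0 g ≤
        profit πw πp πm π0 αr αh ηh C (Wfun πm) 0 g :=
  tdp_only_dispatch_general πp πm π0 πw αh ηh αr wlh wuh C hηh hwlh Wfun hWfun g hg
end
end

section
/- Assume π⁻ ≤ α_r·πʷ ≤ π⁺. For all g₁, g₂ with Γ_NZ1 ≤ g₁ ≤ g₂ ≤ Γ_NZ2, the value function satisfies Π*(g₂) − Π*(g₁) = α_r·πʷ·(g₂ − g₁); in particular the maximum profit increases with renewable generation at rate α_r·πʷ in the interior net-zero region. -/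
open Set

noncomputable section

/-- in the interior net-zero region, the value function grows at rate α_r·πʷ. -/
theorem value_slope_NZ
    (πp πm π0 πw αh ηh αr wlh wuh wlr wur : ℝ) (C : ℝ → ℝ)
    (hπ : πm ≤ πp) (hπm : 0 ≤ πm) (hπw : 0 ≤ πw)
    (hαh : 0 < αh) (hηh : 0 < ηh) (hαr : 0 < αr)
    (hwlh : 0 ≤ wlh) (hwhb : wlh ≤ wuh) (hwlr : 0 ≤ wlr) (hwrb : wlr ≤ wur)
    (hC : StrictConvexOn ℝ univ C) (hCd : Differentiable ℝ C) (hCm : Monotone C)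
    (Wfun : ℝ → ℝ)
    (hWfun : ∀ δ : ℝ, Wfun δ ∈ Icc wlh wuh ∧
      ∀ w ∈ Icc wlh wuh,
        (πw + δ / ηh) * w - C (w / αh) ≤ (πw + δ / ηh) * Wfun δ - C (Wfun δ / αh))
    (hmid1 : πm ≤ αr * πw) (hmid2 : αr * πw ≤ πp) :
    ∀ g₁ g₂ : ℝ, wlr / αr - Wfun (αr * πw) / ηh ≤ g₁ → g₁ ≤ g₂ →
      g₂ ≤ wur / αr - Wfun (αr * πw) / ηh →
      Pstar πw πp πm π0 αr αh ηh C wlh wuh wlr wur g₂ -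
        Pstar πw πp πm π0 αr αh ηh C wlh wuh wlr wur g₁ = αr * πw * (g₂ - g₁) := by
  set W := Wfun (αr * πw) with hWdef
  have hWmem := (hWfun (αr * πw)).1
  have hWopt := (hWfun (αr * πw)).2
  have hαr' : (αr : ℝ) ≠ 0 := ne_of_gt hαr
  have hηh' : (ηh : ℝ) ≠ 0 := ne_of_gt hηh
  have key : ∀ g : ℝ, wlr / αr - W / ηh ≤ g → g ≤ wur / αr - W / ηh →
      Pstar πw πp πm π0 αr αh ηh C wlh wuh wlr wur g =
        ((πw + (αr * πw) / ηh) * W - C (W / αh) - π0) + αr * πw * g := by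
    intro g hg1 hg2
    set wr : ℝ := αr * (g + W / ηh) with hwrdef
    have hwrmem : wr ∈ Icc wlr wur := by
      constructor
      · have : wlr / αr ≤ g + W / ηh := by linarith
        calc wlr = αr * (wlr / αr) := by field_simp
          _ ≤ αr * (g + W / ηh) := by nlinarith
      · have : g + W / ηh ≤ wur / αr := by linarith
        calc wr = αr * (g + W / ηh) := rfl
          _ ≤ αr * (wur / αr) := by nlinarith
          _ = wur := by field_simp
    have hz0 : netz αr ηh W wr g = 0 := by
      simp only [netz, hwrdef]
      field_simp
      ring
    have hval : profit πw πp πm π0 αr αh ηh C W wr g =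
        ((πw + (αr * πw) / ηh) * W - C (W / αh) - π0) + αr * πw * g := by
      rw [profit, epay, hz0]
      simp only [profit, epay, hz0, hwrdef]
      norm_num
      field_simp
      ring
    have hub : ∀ y ∈ ((fun p : ℝ × ℝ => profit πw πp πm π0 αr αh ηh C p.1 p.2 g) ''
        (Icc wlh wuh ×ˢ Icc wlr wur)), y ≤
        ((πw + (αr * πw) / ηh) * W - C (W / αh) - π0) + αr * πw * g := by
      rintro y ⟨⟨wh, wr'⟩, ⟨hwh, hwr'⟩, rfl⟩
      simp only
      set z := netz αr ηh wh wr' g with hzdef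
      have hpay : αr * πw * z ≤ πp * max z 0 + πm * min z 0 := by
        rcases le_or_gt 0 z with hz | hz
        · rw [max_eq_left hz, min_eq_right hz]
          nlinarith
        · rw [max_eq_right hz.le, min_eq_left hz.le]
          nlinarith
      have h1 : profit πw πp πm π0 αr αh ηh C wh wr' g ≤
          (πw + (αr * πw) / ηh) * wh - C (wh / αh) - π0 + αr * πw * g := by
        have hzz : αr * πw * z = πw * wr' - (αr * πw) / ηh * wh - αr * πw * g := by
          simp only [hzdef, netz]; field_simp
        simp only [profit, epay]
        nlinarith [hpay]
      have h2 := hWopt wh hwh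
      linarith
    have hmem : (((πw + (αr * πw) / ηh) * W - C (W / αh) - π0) + αr * πw * g) ∈
        ((fun p : ℝ × ℝ => profit πw πp πm π0 αr αh ηh C p.1 p.2 g) ''
        (Icc wlh wuh ×ˢ Icc wlr wur)) := by
      refine ⟨(W, wr), ⟨hWmem, hwrmem⟩, hval⟩
    exact IsGreatest.csSup_eq ⟨hmem, hub⟩
  intro g₁ g₂ h1 h12 h2
  rw [key g₁ h1 (le_trans h12 h2), key g₂ (le_trans h1 h12) h2]
  ring
end
end

section
/- Assume π⁻ ≤ α_r·πʷ ≤ π⁺. In the two transition regions, the marginal value of renewables is bounded between the adjacent regional rates: (i) for all g₁, g₂ with Γ_IM ≤ g₁ ≤ g₂ ≤ Γ_NZ1, one has α_r·πʷ·(g₂ − g₁) ≤ Π*(g₂) − Π*(g₁) ≤ π⁺·(g₂ − g₁); (ii) for all g₁, g₂ with Γ_NZ2 ≤ g₁ ≤ g₂ ≤ Γ_EX, one has π⁻·(g₂ − g₁) ≤ Π*(g₂) − Π*(g₁) ≤ α_r·πʷ·(g₂ − g₁). -/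
open Set

noncomputable section

/-- Auxiliary: one-sided monotonicity for ψ(w) = πs·w − C(w/αh) around a maximizer. -/
lemma psi_mono_aux (C : ℝ → ℝ) (hC : ConvexOn ℝ (univ : Set ℝ) C) (πs αh a b m t : ℝ)
    (ht0 : 0 ≤ t) (ht1 : t ≤ 1) (hb : b = (1 - t) * a + t * m)
    (ham : πs * a - C (a / αh) ≤ πs * m - C (m / αh)) :
    πs * a - C (a / αh) ≤ πs * b - C (b / αh) := by
  have hconv := hC.2 (mem_univ (a / αh)) (mem_univ (m / αh))
    (by linarith : (0:ℝ) ≤ 1 - t) ht0 (by ring)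
  simp only [smul_eq_mul] at hconv
  have harg : (1 - t) * (a / αh) + t * (m / αh) = b / αh := by rw [hb]; ring
  rw [harg] at hconv
  have hpb : πs * b = (1 - t) * (πs * a) + t * (πs * m) := by rw [hb]; ring
  nlinarith [mul_nonneg ht0 (sub_nonneg.mpr ham)]

lemma psi_mono (C : ℝ → ℝ) (hC : ConvexOn ℝ (univ : Set ℝ) C) (πs αh a b m : ℝ)
    (h1 : min a m ≤ b) (h2 : b ≤ max a m)
    (ham : πs * a - C (a / αh) ≤ πs * m - C (m / αh)) :
    πs * a - C (a / αh) ≤ πs * b - C (b / αh) := by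
  rcases lt_trichotomy a m with h | h | h
  · rw [min_eq_left h.le] at h1
    rw [max_eq_right h.le] at h2
    refine psi_mono_aux C hC πs αh a b m ((b - a) / (m - a))
      (div_nonneg (by linarith) (by linarith)) ((div_le_one (by linarith)).mpr (by linarith))
      ?_ ham
    have hma : m - a ≠ 0 := sub_ne_zero.mpr h.ne'
    field_simp
    ring
  · subst h
    simp only [min_self] at h1
    simp only [max_self] at h2
    have : b = a := le_antisymm h2 h1
    subst this
    exact ham
  · rw [min_eq_right h.le] at h1
    rw [max_eq_left h.le] at h2
    refine psi_mono_aux C hC πs αh a b m ((a - b) / (a - m))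
      (div_nonneg (by linarith) (by linarith)) ((div_le_one (by linarith)).mpr (by linarith))
      ?_ ham
    have hma : a - m ≠ 0 := sub_ne_zero.mpr h.ne'
    field_simp
    ring

lemma div_le_cancel {a b c : ℝ} (hc : 0 < c) (h : a / c ≤ b / c) : a ≤ b :=
  (div_le_div_iff_of_pos_right hc).mp h

/-- In the import→net-zero transition region, the value function is attained at
    the net-zero point with `wr = wlr`. -/
lemma Pstar_eq_lo
    (πp πm π0 πw αh ηh αr wlh wuh wlr wur : ℝ) (C : ℝ → ℝ)
    (hηh : 0 < ηh) (hαr : 0 < αr)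
    (hwhb : wlh ≤ wuh) (hwrb : wlr ≤ wur)
    (hCvx : ConvexOn ℝ (univ : Set ℝ) C)
    (Wfun : ℝ → ℝ)
    (hWfun : ∀ δ : ℝ, Wfun δ ∈ Icc wlh wuh ∧
      ∀ w ∈ Icc wlh wuh,
        (πw + δ / ηh) * w - C (w / αh) ≤ (πw + δ / ηh) * Wfun δ - C (Wfun δ / αh))
    (hmid1 : πm ≤ αr * πw) (hmid2 : αr * πw ≤ πp)
    (g : ℝ) (hg1 : wlr / αr - Wfun πp / ηh ≤ g) (hg2 : g ≤ wlr / αr - Wfun (αr * πw) / ηh) :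
    Pstar πw πp πm π0 αr αh ηh C wlh wuh wlr wur g =
      πw * (ηh * (wlr / αr - g) + wlr) - π0 - C (ηh * (wlr / αr - g) / αh) := by
  set w0 := ηh * (wlr / αr - g) with hw0
  have hcan : w0 / ηh = wlr / αr - g := mul_div_cancel_left₀ _ hηh.ne'
  clear_value w0
  obtain ⟨hWpmem, hWpopt⟩ := hWfun πp
  obtain ⟨hW0mem, hW0opt⟩ := hWfun (αr * πw)
  have hble : Wfun (αr * πw) ≤ w0 := by
    refine div_le_cancel hηh ?_
    rw [hcan]; linarith
  have hbge : w0 ≤ Wfun πp := by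
    refine div_le_cancel hηh ?_
    rw [hcan]; linarith
  have hw0mem : w0 ∈ Icc wlh wuh := ⟨le_trans hW0mem.1 hble, le_trans hbge hWpmem.2⟩
  have key : ∀ wh wr, wh ∈ Icc wlh wuh → wr ∈ Icc wlr wur →
      profit πw πp πm π0 αr αh ηh C wh wr g ≤ πw * (w0 + wlr) - π0 - C (w0 / αh) := by
    intro wh wr hwh hwr
    set z := wr / αr - wh / ηh - g with hzdef
    clear_value z
    have hwreq : wr = αr * z + αr * (wh / ηh) + αr * g := by
      rw [hzdef]; field_simp; ring
    have hmm : max z 0 + min z 0 = z := by rw [max_add_min, add_zero]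
    have hID : profit πw πp πm π0 αr αh ηh C wh wr g
        = (πw + αr * πw / ηh) * wh - C (wh / αh)
          + (αr * πw - πp) * max z 0 + (αr * πw - πm) * min z 0 + αr * πw * g - π0 := by
      unfold profit epay netz
      rw [← hzdef]
      linear_combination πw * hwreq - (αr * πw) * hmm
    have hV : πw * (w0 + wlr) - π0 - C (w0 / αh)
        = (πw + αr * πw / ηh) * w0 - C (w0 / αh) + αr * πw * g - π0 := by
      have h2 : wlr = αr * (w0 / ηh) + αr * g := by rw [hcan]; field_simp; ring
      linear_combination πw * h2
    rw [hID, hV]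
    rcases le_total w0 wh with hcase | hcase
    · -- wh ≥ w0 : use ψ₀ monotonicity, both exchange terms nonpositive
      have hpsi : (πw + αr * πw / ηh) * wh - C (wh / αh)
          ≤ (πw + αr * πw / ηh) * w0 - C (w0 / αh) :=
        psi_mono C hCvx _ αh wh w0 (Wfun (αr * πw))
          ((min_le_right _ _).trans hble) (hcase.trans (le_max_left _ _))
          (hW0opt wh hwh)
      have hmax : (αr * πw - πp) * max z 0 ≤ 0 :=
        mul_nonpos_of_nonpos_of_nonneg (by linarith) (le_max_right _ _)
      have hmin : (αr * πw - πm) * min z 0 ≤ 0 :=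
        mul_nonpos_of_nonneg_of_nonpos (by linarith) (min_le_right _ _)
      linarith
    · -- wh ≤ w0 : use ψ₊ monotonicity
      have hzlb : (w0 - wh) / ηh ≤ z := by
        have h1 : wlr / αr ≤ wr / αr := (div_le_div_iff_of_pos_right hαr).mpr hwr.1
        rw [hzdef, sub_div, hcan]
        linarith
      have hmax : (αr * πw - πp) * max z 0 ≤ (αr * πw - πp) * ((w0 - wh) / ηh) :=
        mul_le_mul_of_nonpos_left (hzlb.trans (le_max_left _ _)) (by linarith)
      have hmin : (αr * πw - πm) * min z 0 ≤ 0 :=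
        mul_nonpos_of_nonneg_of_nonpos (by linarith) (min_le_right _ _)
      have hpsi : (πw + πp / ηh) * wh - C (wh / αh)
          ≤ (πw + πp / ηh) * w0 - C (w0 / αh) :=
        psi_mono C hCvx _ αh wh w0 (Wfun πp)
          ((min_le_left _ _).trans hcase) (hbge.trans (le_max_right _ _))
          (hWpopt wh hwh)
      have hkey : (αr * πw - πp) * ((w0 - wh) / ηh) + (πw + αr * πw / ηh) * wh
          - (πw + αr * πw / ηh) * w0 = (πw + πp / ηh) * wh - (πw + πp / ηh) * w0 := by ring
      linarith
  have hz0 : wlr / αr - w0 / ηh - g = 0 := by rw [hcan]; ring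
  have hpt : profit πw πp πm π0 αr αh ηh C w0 wlr g
      = πw * (w0 + wlr) - π0 - C (w0 / αh) := by
    unfold profit epay netz
    rw [hz0]
    simp
  unfold Pstar
  apply le_antisymm
  · apply csSup_le
    · exact (Set.Nonempty.image _ ⟨(wlh, wlr), ⟨⟨le_rfl, hwhb⟩, ⟨le_rfl, hwrb⟩⟩⟩)
    · rintro x ⟨⟨wh, wr⟩, ⟨hwh, hwr⟩, rfl⟩
      exact key wh wr hwh hwr
  · apply le_csSup
    · refine ⟨πw * (w0 + wlr) - π0 - C (w0 / αh), ?_⟩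
      rintro x ⟨⟨wh, wr⟩, ⟨hwh, hwr⟩, rfl⟩
      exact key wh wr hwh hwr
    · exact ⟨(w0, wlr), ⟨hw0mem, ⟨le_rfl, hwrb⟩⟩, hpt⟩

/-- In the net-zero→export transition region, the value function is attained at
    the net-zero point with `wr = wur`. -/
lemma Pstar_eq_hi
    (πp πm π0 πw αh ηh αr wlh wuh wlr wur : ℝ) (C : ℝ → ℝ)
    (hηh : 0 < ηh) (hαr : 0 < αr)
    (hwhb : wlh ≤ wuh) (hwrb : wlr ≤ wur)
    (hCvx : ConvexOn ℝ (univ : Set ℝ) C)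
    (Wfun : ℝ → ℝ)
    (hWfun : ∀ δ : ℝ, Wfun δ ∈ Icc wlh wuh ∧
      ∀ w ∈ Icc wlh wuh,
        (πw + δ / ηh) * w - C (w / αh) ≤ (πw + δ / ηh) * Wfun δ - C (Wfun δ / αh))
    (hmid1 : πm ≤ αr * πw) (hmid2 : αr * πw ≤ πp)
    (g : ℝ) (hg1 : wur / αr - Wfun (αr * πw) / ηh ≤ g) (hg2 : g ≤ wur / αr - Wfun πm / ηh) :
    Pstar πw πp πm π0 αr αh ηh C wlh wuh wlr wur g =
      πw * (ηh * (wur / αr - g) + wur) - π0 - C (ηh * (wur / αr - g) / αh) := by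
  set w0 := ηh * (wur / αr - g) with hw0
  have hcan : w0 / ηh = wur / αr - g := mul_div_cancel_left₀ _ hηh.ne'
  clear_value w0
  obtain ⟨hWmmem, hWmopt⟩ := hWfun πm
  obtain ⟨hW0mem, hW0opt⟩ := hWfun (αr * πw)
  have hble : Wfun πm ≤ w0 := by
    refine div_le_cancel hηh ?_
    rw [hcan]; linarith
  have hbge : w0 ≤ Wfun (αr * πw) := by
    refine div_le_cancel hηh ?_
    rw [hcan]; linarith
  have hw0mem : w0 ∈ Icc wlh wuh := ⟨le_trans hWmmem.1 hble, le_trans hbge hW0mem.2⟩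
  have key : ∀ wh wr, wh ∈ Icc wlh wuh → wr ∈ Icc wlr wur →
      profit πw πp πm π0 αr αh ηh C wh wr g ≤ πw * (w0 + wur) - π0 - C (w0 / αh) := by
    intro wh wr hwh hwr
    set z := wr / αr - wh / ηh - g with hzdef
    clear_value z
    have hwreq : wr = αr * z + αr * (wh / ηh) + αr * g := by
      rw [hzdef]; field_simp; ring
    have hmm : max z 0 + min z 0 = z := by rw [max_add_min, add_zero]
    have hID : profit πw πp πm π0 αr αh ηh C wh wr g
        = (πw + αr * πw / ηh) * wh - C (wh / αh)
          + (αr * πw - πp) * max z 0 + (αr * πw - πm) * min z 0 + αr * πw * g - π0 := by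
      unfold profit epay netz
      rw [← hzdef]
      linear_combination πw * hwreq - (αr * πw) * hmm
    have hV : πw * (w0 + wur) - π0 - C (w0 / αh)
        = (πw + αr * πw / ηh) * w0 - C (w0 / αh) + αr * πw * g - π0 := by
      have h2 : wur = αr * (w0 / ηh) + αr * g := by rw [hcan]; field_simp; ring
      linear_combination πw * h2
    rw [hID, hV]
    rcases le_total wh w0 with hcase | hcase
    · -- wh ≤ w0 : use ψ₀ monotonicity, both exchange terms nonpositive
      have hpsi : (πw + αr * πw / ηh) * wh - C (wh / αh)
          ≤ (πw + αr * πw / ηh) * w0 - C (w0 / αh) :=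
        psi_mono C hCvx _ αh wh w0 (Wfun (αr * πw))
          ((min_le_left _ _).trans hcase) (hbge.trans (le_max_right _ _))
          (hW0opt wh hwh)
      have hmax : (αr * πw - πp) * max z 0 ≤ 0 :=
        mul_nonpos_of_nonpos_of_nonneg (by linarith) (le_max_right _ _)
      have hmin : (αr * πw - πm) * min z 0 ≤ 0 :=
        mul_nonpos_of_nonneg_of_nonpos (by linarith) (min_le_right _ _)
      linarith
    · -- w0 ≤ wh : use ψ₋ monotonicity
      have hzub : z ≤ (w0 - wh) / ηh := by
        have h1 : wr / αr ≤ wur / αr := (div_le_div_iff_of_pos_right hαr).mpr hwr.2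
        rw [hzdef, sub_div, hcan]
        linarith
      have hmin : (αr * πw - πm) * min z 0 ≤ (αr * πw - πm) * ((w0 - wh) / ηh) :=
        mul_le_mul_of_nonneg_left ((min_le_left _ _).trans hzub) (by linarith)
      have hmax : (αr * πw - πp) * max z 0 ≤ 0 :=
        mul_nonpos_of_nonpos_of_nonneg (by linarith) (le_max_right _ _)
      have hpsi : (πw + πm / ηh) * wh - C (wh / αh)
          ≤ (πw + πm / ηh) * w0 - C (w0 / αh) :=
        psi_mono C hCvx _ αh wh w0 (Wfun πm)
          ((min_le_right _ _).trans hble) (hcase.trans (le_max_left _ _))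
          (hWmopt wh hwh)
      have hkey : (αr * πw - πm) * ((w0 - wh) / ηh) + (πw + αr * πw / ηh) * wh
          - (πw + αr * πw / ηh) * w0 = (πw + πm / ηh) * wh - (πw + πm / ηh) * w0 := by ring
      linarith
  have hz0 : wur / αr - w0 / ηh - g = 0 := by rw [hcan]; ring
  have hpt : profit πw πp πm π0 αr αh ηh C w0 wur g
      = πw * (w0 + wur) - π0 - C (w0 / αh) := by
    unfold profit epay netz
    rw [hz0]
    simp
  unfold Pstar
  apply le_antisymm
  · apply csSup_le
    · exact (Set.Nonempty.image _ ⟨(wlh, wlr), ⟨⟨le_rfl, hwhb⟩, ⟨le_rfl, hwrb⟩⟩⟩)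
    · rintro x ⟨⟨wh, wr⟩, ⟨hwh, hwr⟩, rfl⟩
      exact key wh wr hwh hwr
  · apply le_csSup
    · refine ⟨πw * (w0 + wur) - π0 - C (w0 / αh), ?_⟩
      rintro x ⟨⟨wh, wr⟩, ⟨hwh, hwr⟩, rfl⟩
      exact key wh wr hwh hwr
    · exact ⟨(w0, wur), ⟨hw0mem, ⟨hwrb, le_rfl⟩⟩, hpt⟩


/-- bounds on the marginal value of renewables in the transition regions. -/
theorem value_slope_transition
    (πp πm π0 πw αh ηh αr wlh wuh wlr wur : ℝ) (C : ℝ → ℝ)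
    (hπ : πm ≤ πp) (hπm : 0 ≤ πm) (hπw : 0 ≤ πw)
    (hαh : 0 < αh) (hηh : 0 < ηh) (hαr : 0 < αr)
    (hwlh : 0 ≤ wlh) (hwhb : wlh ≤ wuh) (hwlr : 0 ≤ wlr) (hwrb : wlr ≤ wur)
    (hC : StrictConvexOn ℝ univ C) (hCd : Differentiable ℝ C) (hCm : Monotone C)
    (Wfun : ℝ → ℝ)
    (hWfun : ∀ δ : ℝ, Wfun δ ∈ Icc wlh wuh ∧
      ∀ w ∈ Icc wlh wuh,
        (πw + δ / ηh) * w - C (w / αh) ≤ (πw + δ / ηh) * Wfun δ - C (Wfun δ / αh))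
    (hmid1 : πm ≤ αr * πw) (hmid2 : αr * πw ≤ πp) :
    (∀ g₁ g₂ : ℝ, wlr / αr - Wfun πp / ηh ≤ g₁ → g₁ ≤ g₂ →
      g₂ ≤ wlr / αr - Wfun (αr * πw) / ηh →
      αr * πw * (g₂ - g₁) ≤
        Pstar πw πp πm π0 αr αh ηh C wlh wuh wlr wur g₂ -
          Pstar πw πp πm π0 αr αh ηh C wlh wuh wlr wur g₁ ∧
      Pstar πw πp πm π0 αr αh ηh C wlh wuh wlr wur g₂ -
          Pstar πw πp πm π0 αr αh ηh C wlh wuh wlr wur g₁ ≤ πp * (g₂ - g₁)) ∧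
    (∀ g₁ g₂ : ℝ, wur / αr - Wfun (αr * πw) / ηh ≤ g₁ → g₁ ≤ g₂ →
      g₂ ≤ wur / αr - Wfun πm / ηh →
      πm * (g₂ - g₁) ≤
        Pstar πw πp πm π0 αr αh ηh C wlh wuh wlr wur g₂ -
          Pstar πw πp πm π0 αr αh ηh C wlh wuh wlr wur g₁ ∧
      Pstar πw πp πm π0 αr αh ηh C wlh wuh wlr wur g₂ -
          Pstar πw πp πm π0 αr αh ηh C wlh wuh wlr wur g₁ ≤ αr * πw * (g₂ - g₁)) := by
  obtain ⟨hWpmem, hWpopt⟩ := hWfun πp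
  obtain ⟨hW0mem, hW0opt⟩ := hWfun (αr * πw)
  obtain ⟨hWmmem, hWmopt⟩ := hWfun πm
  constructor
  · intro g₁ g₂ h1 h12 h2
    have E1 := Pstar_eq_lo πp πm π0 πw αh ηh αr wlh wuh wlr wur C hηh hαr hwhb hwrb
      hC.convexOn Wfun hWfun hmid1 hmid2 g₁ h1 (h12.trans h2)
    have E2 := Pstar_eq_lo πp πm π0 πw αh ηh αr wlh wuh wlr wur C hηh hαr hwhb hwrb
      hC.convexOn Wfun hWfun hmid1 hmid2 g₂ (h1.trans h12) h2
    rw [E1, E2]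
    set w1 := ηh * (wlr / αr - g₁) with hw1
    set w2 := ηh * (wlr / αr - g₂) with hw2
    have hcan1 : w1 / ηh = wlr / αr - g₁ := mul_div_cancel_left₀ _ hηh.ne'
    have hcan2 : w2 / ηh = wlr / αr - g₂ := mul_div_cancel_left₀ _ hηh.ne'
    clear_value w1 w2
    have h21 : w2 ≤ w1 := div_le_cancel hηh (by rw [hcan1, hcan2]; linarith)
    have hW0w2 : Wfun (αr * πw) ≤ w2 := div_le_cancel hηh (by rw [hcan2]; linarith)
    have hw1Wp : w1 ≤ Wfun πp := div_le_cancel hηh (by rw [hcan1]; linarith)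
    have hm1 : w1 ∈ Icc wlh wuh :=
      ⟨hW0mem.1.trans (hW0w2.trans h21), hw1Wp.trans hWpmem.2⟩
    have hm2 : w2 ∈ Icc wlh wuh :=
      ⟨hW0mem.1.trans hW0w2, (h21.trans hw1Wp).trans hWpmem.2⟩
    have hpsiL : (πw + αr * πw / ηh) * w1 - C (w1 / αh)
        ≤ (πw + αr * πw / ηh) * w2 - C (w2 / αh) :=
      psi_mono C hC.convexOn _ αh w1 w2 (Wfun (αr * πw))
        ((min_le_right _ _).trans hW0w2) (h21.trans (le_max_left _ _)) (hW0opt w1 hm1)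
    have hpsiU : (πw + πp / ηh) * w2 - C (w2 / αh)
        ≤ (πw + πp / ηh) * w1 - C (w1 / αh) :=
      psi_mono C hC.convexOn _ αh w2 w1 (Wfun πp)
        ((min_le_left _ _).trans h21) (hw1Wp.trans (le_max_right _ _)) (hWpopt w2 hm2)
    have hc1 : αr * πw / ηh * (w1 - w2) = αr * πw * (g₂ - g₁) := by
      rw [hw1, hw2]; field_simp; ring
    have hc2 : πp / ηh * (w1 - w2) = πp * (g₂ - g₁) := by
      rw [hw1, hw2]; field_simp; ring
    constructor
    · linarith
    · linarith
  · intro g₁ g₂ h1 h12 h2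
    have E1 := Pstar_eq_hi πp πm π0 πw αh ηh αr wlh wuh wlr wur C hηh hαr hwhb hwrb
      hC.convexOn Wfun hWfun hmid1 hmid2 g₁ h1 (h12.trans h2)
    have E2 := Pstar_eq_hi πp πm π0 πw αh ηh αr wlh wuh wlr wur C hηh hαr hwhb hwrb
      hC.convexOn Wfun hWfun hmid1 hmid2 g₂ (h1.trans h12) h2
    rw [E1, E2]
    set w1 := ηh * (wur / αr - g₁) with hw1
    set w2 := ηh * (wur / αr - g₂) with hw2
    have hcan1 : w1 / ηh = wur / αr - g₁ := mul_div_cancel_left₀ _ hηh.ne'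
    have hcan2 : w2 / ηh = wur / αr - g₂ := mul_div_cancel_left₀ _ hηh.ne'
    clear_value w1 w2
    have h21 : w2 ≤ w1 := div_le_cancel hηh (by rw [hcan1, hcan2]; linarith)
    have hWmw2 : Wfun πm ≤ w2 := div_le_cancel hηh (by rw [hcan2]; linarith)
    have hw1W0 : w1 ≤ Wfun (αr * πw) := div_le_cancel hηh (by rw [hcan1]; linarith)
    have hm1 : w1 ∈ Icc wlh wuh :=
      ⟨hWmmem.1.trans (hWmw2.trans h21), hw1W0.trans hW0mem.2⟩
    have hm2 : w2 ∈ Icc wlh wuh :=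
      ⟨hWmmem.1.trans hWmw2, (h21.trans hw1W0).trans hW0mem.2⟩
    have hpsiL : (πw + πm / ηh) * w1 - C (w1 / αh)
        ≤ (πw + πm / ηh) * w2 - C (w2 / αh) :=
      psi_mono C hC.convexOn _ αh w1 w2 (Wfun πm)
        ((min_le_right _ _).trans hWmw2) (h21.trans (le_max_left _ _)) (hWmopt w1 hm1)
    have hpsiU : (πw + αr * πw / ηh) * w2 - C (w2 / αh)
        ≤ (πw + αr * πw / ηh) * w1 - C (w1 / αh) :=
      psi_mono C hC.convexOn _ αh w2 w1 (Wfun (αr * πw))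
        ((min_le_left _ _).trans h21) (hw1W0.trans (le_max_right _ _)) (hW0opt w2 hm2)
    have hc1 : πm / ηh * (w1 - w2) = πm * (g₂ - g₁) := by
      rw [hw1, hw2]; field_simp; ring
    have hc2 : αr * πw / ηh * (w1 - w2) = αr * πw * (g₂ - g₁) := by
      rw [hw1, hw2]; field_simp; ring
    constructor
    · linarith
    · linarith
end
end
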